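/- For any consistent theory T extending Robinson's arithmetic Q and any natural number n, the following are equivalent: (i) T is Σ_n-sound; (ii) T is Π_{n+1}-sound; (iii) T + Th_{Σ_{n+1}}(ℕ) is consistent, where Th_{Σ_{n+1}}(ℕ) is the set of all Σ_{n+1} sentences true in the standard model ℕ. -/

import Mathlib

open FirstOrder FirstOrder.Language

/-! ## The language of arithmetic -/

/-- Function symbols of the language of arithmetic: `0`, successor, `+`, `·`. -/
inductive ArithFunc : ℕ → Type
  | zero : ArithFunc 0
  | succ : ArithFunc 1
  | add : ArithFunc 2
  | mul : ArithFunc 2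
deriving DecidableEq

/-- Relation symbols of the language of arithmetic: `≤`. -/
inductive ArithRel : ℕ → Type
  | le : ArithRel 2
deriving DecidableEq

/-- The first-order language of arithmetic. -/
def LA : FirstOrder.Language := ⟨ArithFunc, ArithRel⟩

instance : Countable (Σ l, LA.Functions l) := by
  refine Function.Injective.countable (f := fun x : Σ l, LA.Functions l =>
    (match x with
      | ⟨_, ArithFunc.zero⟩ => 0
      | ⟨_, ArithFunc.succ⟩ => 1
      | ⟨_, ArithFunc.add⟩ => 2
      | ⟨_, ArithFunc.mul⟩ => (3 : ℕ))) ?_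
  rintro ⟨_, f⟩ ⟨_, g⟩ h
  cases f <;> cases g <;> simp_all

instance : Countable (Σ l, LA.Relations l) := by
  refine Function.Injective.countable (f := fun _ : Σ l, LA.Relations l => (0 : ℕ)) ?_
  rintro ⟨_, r⟩ ⟨_, s⟩ h
  cases r; cases s; rfl

/-- The standard model of arithmetic. -/
instance : LA.Structure ℕ where
  funMap {n} f v :=
    match f with
    | ArithFunc.zero => 0
    | ArithFunc.succ => v 0 + 1
    | ArithFunc.add => v 0 + v 1
    | ArithFunc.mul => v 0 * v 1
  RelMap {n} r v :=
    match r with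
    | ArithRel.le => v 0 ≤ v 1

/-! ## Terms and formulas -/

/-- Terms in context `k` (formulas with `k` free variable slots and no other free variables). -/
abbrev Tk (k : ℕ) := LA.Term (Empty ⊕ Fin k)

/-- Formulas of arithmetic with (at most) `k` free variables. -/
abbrev BF (k : ℕ) := LA.BoundedFormula Empty k

/-- The `i`-th variable, as a term. -/
def vT {k : ℕ} (i : Fin k) : Tk k := Term.var (Sum.inr i)

/-- The term `0`. -/
def zer {k : ℕ} : Tk k := Term.func ArithFunc.zero ![]

/-- The successor of a term. -/
def suc {k : ℕ} (t : Tk k) : Tk k := Term.func ArithFunc.succ ![t]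

/-- The sum of two terms. -/
def pls {k : ℕ} (t u : Tk k) : Tk k := Term.func ArithFunc.add ![t, u]

/-- The product of two terms. -/
def tms {k : ℕ} (t u : Tk k) : Tk k := Term.func ArithFunc.mul ![t, u]

/-- The atomic formula `t = u`. -/
def eqF {k : ℕ} (t u : Tk k) : BF k := BoundedFormula.equal t u

/-- The atomic formula `t ≤ u`. -/
def leF {k : ℕ} (t u : Tk k) : BF k := BoundedFormula.rel ArithRel.le ![t, u]

/-- The numeral for `m`. -/
def numeral : ℕ → LA.Term Empty
  | 0 => Term.func ArithFunc.zero ![]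
  | m + 1 => Term.func ArithFunc.succ ![numeral m]

/-- A closed term viewed as a term in context `k`. -/
def cterm {k : ℕ} (t : LA.Term Empty) : Tk k := t.relabel Sum.inl

/-- Lift a term in context `k` to context `k+1`. -/
def liftT {k : ℕ} (t : Tk k) : Tk (k + 1) := t.relabel (Sum.map id Fin.castSucc)

/-- Simultaneous substitution of terms in context `j` for all the free variable
slots of a formula with `k` free variable slots. -/
def bsubst {k j : ℕ} (φ : BF k) (ts : Fin k → Tk j) : BF j :=
  (φ.toFormula.subst (Sum.elim (fun e => Empty.elim e) ts)).relabel id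

/-- The sentence `φ(m)` obtained by substituting the numeral for `m`. -/
def appN (φ : BF 1) (m : ℕ) : LA.Sentence := bsubst φ ![cterm (numeral m)]

/-- The sentence `φ(m, w)` obtained by substituting numerals. -/
def app2 (φ : BF 2) (m w : ℕ) : LA.Sentence := bsubst φ ![cterm (numeral m), cterm (numeral w)]

/-- The sentence `φ(v 0, …, v (k-1))` obtained by substituting numerals. -/
def appAll {k : ℕ} (φ : BF k) (v : Fin k → ℕ) : LA.Sentence :=
  bsubst φ (fun i => cterm (numeral (v i)))

/-- The false sentence. -/
def fal : LA.Sentence := BoundedFormula.falsum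

/-! ## The arithmetical hierarchy -/

/-- `Δ₀` formulas: built from atomic formulas by boolean connectives and
bounded quantifiers. -/
inductive IsDelta0 : ∀ {k : ℕ}, BF k → Prop
  | falsum {k : ℕ} : IsDelta0 (k := k) BoundedFormula.falsum
  | equal {k : ℕ} (t u : Tk k) : IsDelta0 (BoundedFormula.equal t u)
  | rel {k l : ℕ} (R : LA.Relations l) (ts : Fin l → Tk k) : IsDelta0 (BoundedFormula.rel R ts)
  | imp {k : ℕ} {φ ψ : BF k} : IsDelta0 φ → IsDelta0 ψ → IsDelta0 (φ.imp ψ)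
  | ballLE {k : ℕ} (t : Tk k) {φ : BF (k + 1)} :
      IsDelta0 φ → IsDelta0 (((leF (vT (Fin.last k)) (liftT t)).imp φ).all)
  | bexLE {k : ℕ} (t : Tk k) {φ : BF (k + 1)} :
      IsDelta0 φ → IsDelta0 (((leF (vT (Fin.last k)) (liftT t)) ⊓ φ).ex)

mutual
  /-- `Σₙ` formulas of the arithmetical hierarchy. -/
  inductive IsSigmaF : ℕ → ∀ {k : ℕ}, BF k → Prop
    | delta0 {n k : ℕ} {φ : BF k} : IsDelta0 φ → IsSigmaF n φ
    | ofPi {n k : ℕ} {φ : BF k} : IsPiF n φ → IsSigmaF (n + 1) φ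
    | mono {n k : ℕ} {φ : BF k} : IsSigmaF n φ → IsSigmaF (n + 1) φ
    | ex {n k : ℕ} {φ : BF (k + 1)} : IsSigmaF (n + 1) φ → IsSigmaF (n + 1) φ.ex

  /-- `Πₙ` formulas of the arithmetical hierarchy. -/
  inductive IsPiF : ℕ → ∀ {k : ℕ}, BF k → Prop
    | delta0 {n k : ℕ} {φ : BF k} : IsDelta0 φ → IsPiF n φ
    | ofSigma {n k : ℕ} {φ : BF k} : IsSigmaF n φ → IsPiF (n + 1) φ
    | mono {n k : ℕ} {φ : BF k} : IsPiF n φ → IsPiF (n + 1) φ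
    | all {n k : ℕ} {φ : BF (k + 1)} : IsPiF (n + 1) φ → IsPiF (n + 1) φ.all
end

/-- `Γ`, i.e. `Σₙ` (for `b = true`) or `Πₙ` (for `b = false`). -/
def GammaClass (b : Bool) (n : ℕ) {k : ℕ} (φ : BF k) : Prop :=
  match b with
  | true => IsSigmaF n φ
  | false => IsPiF n φ

/-! ## Satisfaction, provability, truth -/

/-- Satisfaction of a formula in a structure, under an assignment of the free variables. -/
def SatM (M : Type*) [LA.Structure M] {k : ℕ} (φ : BF k) (xs : Fin k → M) : Prop :=
  φ.Realize (fun e => Empty.elim e) xs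

/-- Satisfaction of a sentence in a structure. -/
def SatS (M : Type*) [LA.Structure M] (φ : LA.Sentence) : Prop := SatM M φ ![]

/-- Truth in the standard model. -/
def TrueInN (φ : LA.Sentence) : Prop := SatS ℕ φ

/-- Provability (by completeness, semantic consequence) of a sentence from a theory. -/
def Prv (T : LA.Theory) (φ : LA.Sentence) : Prop := T ⊨ᵇ φ

/-- Consistency of a theory. -/
def Consistent (T : LA.Theory) : Prop := ¬ Prv T fal

/-- `T` is an extension of `S`: `T` proves every axiom of `S`. -/
def Extends (T S : LA.Theory) : Prop := ∀ φ ∈ S, Prv T φ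

/-- The set of true `Σₙ` sentences. -/
def trueSigma (n : ℕ) : LA.Theory := {φ : LA.Sentence | IsSigmaF n φ ∧ TrueInN φ}

/-- The set of true `Πₙ` sentences. -/
def truePi (n : ℕ) : LA.Theory := {φ : LA.Sentence | IsPiF n φ ∧ TrueInN φ}

/-- The set of true `Γ` sentences. -/
def trueGamma (b : Bool) (n : ℕ) : LA.Theory := {φ : LA.Sentence | GammaClass b n φ ∧ TrueInN φ}

/-- `T` is `Σₙ`-sound: every provable `Σₙ` sentence is true. -/
def SigmaSound (n : ℕ) (T : LA.Theory) : Prop :=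
  ∀ φ : LA.Sentence, IsSigmaF n φ → Prv T φ → TrueInN φ

/-- `T` is `Πₙ`-sound: every provable `Πₙ` sentence is true. -/
def PiSound (n : ℕ) (T : LA.Theory) : Prop :=
  ∀ φ : LA.Sentence, IsPiF n φ → Prv T φ → TrueInN φ

/-! ## Gödel numbering -/

instance : Countable (Σ n, BF n) := by
  exact Function.Injective.countable
    (BoundedFormula.listEncode_sigma_injective (L := LA) (α := Empty))

/-- A Gödel numbering of the formulas of arithmetic. -/
noncomputable def gnum {k : ℕ} (φ : BF k) : ℕ :=
  (Encodable.ofCountable (Σ n, BF n)).encode (⟨k, φ⟩ : Σ n, BF n)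

/-- The set of Gödel numbers of the axioms of `T` is definable by a `Σₙ` formula
in the standard model. -/
def SigmaDefinable (n : ℕ) (T : LA.Theory) : Prop :=
  ∃ φ : BF 1, IsSigmaF n φ ∧ ∀ j : ℕ, (∃ ψ ∈ T, gnum ψ = j) ↔ TrueInN (appN φ j)

/-- The set of Gödel numbers of the axioms of `T` is definable by a `Πₙ` formula
in the standard model. -/
def PiDefinable (n : ℕ) (T : LA.Theory) : Prop :=
  ∃ φ : BF 1, IsPiF n φ ∧ ∀ j : ℕ, (∃ ψ ∈ T, gnum ψ = j) ↔ TrueInN (appN φ j)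

/-! ## Arithmetic theories -/

/-- Robinson's arithmetic `Q`. -/
def QTheory : LA.Theory :=
  { ((eqF (k := 1) (suc (vT 0)) zer).not).alls,
    (((eqF (k := 2) (suc (vT 0)) (suc (vT 1))).imp (eqF (vT 0) (vT 1))).alls),
    (((eqF (k := 1) (vT 0) zer).not.imp ((eqF (k := 2) (vT 0) (suc (vT 1))).ex)).alls),
    ((eqF (k := 1) (pls (vT 0) zer) (vT 0)).alls),
    ((eqF (k := 2) (pls (vT 0) (suc (vT 1))) (suc (pls (vT 0) (vT 1)))).alls),
    ((eqF (k := 1) (tms (vT 0) zer) zer).alls),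
    ((eqF (k := 2) (tms (vT 0) (suc (vT 1))) (pls (tms (vT 0) (vT 1)) (vT 0))).alls),
    (((leF (k := 2) (vT 0) (vT 1)).iff ((eqF (k := 3) (pls (vT 2) (vT 0)) (vT 1)).ex)).alls) }

/-- The induction axiom for a formula `φ(x₁, …, x_k, y)`, with induction on the last
variable `y` and the remaining variables as parameters. -/
def inductionAx {k : ℕ} (φ : BF (k + 1)) : LA.Sentence :=
  (((bsubst φ (Fin.snoc (fun i : Fin k => vT i) zer)) ⊓
      ((φ.imp (bsubst φ (Fin.snoc (fun i : Fin k => vT i.castSucc)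
        (suc (vT (Fin.last k)))))).all)).imp φ.all).alls

/-- `IΣₙ`: Robinson arithmetic plus induction for `Σₙ` formulas. -/
def ISigma (n : ℕ) : LA.Theory :=
  QTheory ∪ {s | ∃ (k : ℕ) (φ : BF (k + 1)), IsSigmaF n φ ∧ s = inductionAx φ}

/-- Peano arithmetic `PA`: Robinson arithmetic plus induction for all formulas. -/
def PATheory : LA.Theory :=
  QTheory ∪ {s | ∃ (k : ℕ) (φ : BF (k + 1)), s = inductionAx φ}

/-- The formula `β(a,b,i) = w` for Gödel's β-function (`β(a,b,i)` is the remainder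
of `a` modulo `1 + (i+1)·b`). -/
def betaEq {k : ℕ} (a b i w : Tk k) : BF k :=
  ((eqF (liftT a) (pls (tms (vT (Fin.last k)) (suc (tms (suc (liftT i)) (liftT b)))) (liftT w))) ⊓
    (leF (liftT w) (tms (suc (liftT i)) (liftT b)))).ex

/-- A formula `expGraph(x, y, z)` expressing `z = x ^ y`, via the β-function. -/
def expGraph : BF 3 :=
  (((betaEq (k := 5) (vT 3) (vT 4) zer (suc zer)) ⊓
    ((((leF (k := 6) (suc (vT 5)) (vT 1)).imp
        (((betaEq (k := 7) (vT 3) (vT 4) (vT 5) (vT 6)) ⊓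
          (betaEq (k := 7) (vT 3) (vT 4) (suc (vT 5)) (tms (vT 6) (vT 0)))).ex)).all))) ⊓
    (betaEq (k := 5) (vT 3) (vT 4) (vT 1) (vT 2))).ex.ex

/-- The axiom asserting the totality of exponentiation. -/
def expTotal : LA.Sentence := expGraph.ex.alls

/-- `IΔ₀ + exp`: Robinson arithmetic plus `Δ₀` induction plus totality of exponentiation. -/
def IDelta0Exp : LA.Theory :=
  (QTheory ∪ {s | ∃ (k : ℕ) (φ : BF (k + 1)), IsDelta0 φ ∧ s = inductionAx φ}) ∪ {expTotal}

/-! ## Provability predicates -/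

/-- A provability predicate for the theory `A`, given by a proof formula `prf(x, w)`
(“`w` is a proof of the sentence with Gödel number `x`”) which numerates `A`-provability
in the standard model and satisfies the Hilbert–Bernays–Löb derivability conditions. -/
structure ProvPred (A : LA.Theory) where
  /-- The proof formula. -/
  prf : BF 2
  /-- Standard proofs are sound for provability in `A`. -/
  sound : ∀ (ψ : LA.Sentence) (w : ℕ), TrueInN (app2 prf (gnum ψ) w) → Prv A ψ
  /-- Every `A`-provable sentence has a standard proof. -/
  complete : ∀ ψ : LA.Sentence, Prv A ψ → ∃ w : ℕ, TrueInN (app2 prf (gnum ψ) w)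
  /-- First derivability condition. -/
  d1 : ∀ ψ : LA.Sentence, Prv A ψ → Prv IDelta0Exp (appN prf.ex (gnum ψ))
  /-- Second derivability condition. -/
  d2 : ∀ φ ψ : LA.Sentence,
    Prv IDelta0Exp (((appN prf.ex (gnum φ)) ⊓ (appN prf.ex (gnum (φ.imp ψ)))).imp
      (appN prf.ex (gnum ψ)))
  /-- Third derivability condition. -/
  d3 : ∀ φ : LA.Sentence,
    Prv IDelta0Exp ((appN prf.ex (gnum φ)).imp (appN prf.ex (gnum (appN prf.ex (gnum φ)))))

/-- The provability formula `Pr(x) := ∃ w, prf(x, w)`. -/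
noncomputable def ProvPred.pr {A : LA.Theory} (P : ProvPred A) : BF 1 := P.prf.ex

/-- The sentence `Pr(⌜ψ⌝)`. -/
noncomputable def ProvPred.prSent {A : LA.Theory} (P : ProvPred A) (ψ : LA.Sentence) :
    LA.Sentence := appN P.pr (gnum ψ)

/-- The consistency statement `¬ Pr(⌜⊥⌝)`. -/
noncomputable def ProvPred.con {A : LA.Theory} (P : ProvPred A) : LA.Sentence :=
  (P.prSent fal).not

/-- The bounded provability formula `Pr^k(x) := ∃ w ≤ k, prf(x, w)`. -/
noncomputable def bddPr (prf : BF 2) (k : ℕ) : BF 1 :=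
  ((leF (vT 1) (cterm (numeral k))) ⊓ prf).ex

/-- The bounded consistency statement `Con^k := ¬ Pr^k(⌜⊥⌝)`. -/
noncomputable def ProvPred.conK {A : LA.Theory} (P : ProvPred A) (k : ℕ) : LA.Sentence :=
  (appN (bddPr P.prf k) (gnum fal)).not

/-! ## Models of arithmetic -/

/-- The value of the numeral `k` in a structure `M`. -/
def natLit (M : Type*) [LA.Structure M] (k : ℕ) : M :=
  (numeral k).realize (fun e => Empty.elim e)

/-- `f : M ↪ N` is a `Σₙ`-elementary embedding: `Σₙ` formulas with parameters in `M`
hold in `M` iff they hold in `N`. -/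
def SigmaElemEmb (n : ℕ) {M N : Type*} [LA.Structure M] [LA.Structure N]
    (f : M ↪[LA] N) : Prop :=
  ∀ (k : ℕ) (φ : BF k), IsSigmaF n φ → ∀ xs : Fin k → M,
    (SatM M φ xs ↔ SatM N φ (fun i => f (xs i)))

/-- `f : M ↪ N` makes `M` an initial segment of `N`: any element of `N` below an
element of `M` is in (the image of) `M`. -/
def IsEndEmb {M N : Type*} [LA.Structure M] [LA.Structure N] (f : M ↪[LA] N) : Prop :=
  ∀ (a : M) (b : N), Structure.RelMap (L := LA) ArithRel.le ![b, f a] → ∃ a' : M, f a' = b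

/-- Ackermann's membership relation: the `k`-th bit of the binary expansion of `a` is `1`. -/
def ackMem {M : Type*} [LA.Structure M] (k : ℕ) (a : M) : Prop :=
  ∃ q r : M,
    a = Structure.funMap (L := LA) ArithFunc.add
      ![Structure.funMap (L := LA) ArithFunc.add
          ![Structure.funMap (L := LA) ArithFunc.mul ![q, natLit M (2 ^ (k + 1))],
            natLit M (2 ^ k)], r] ∧
    Structure.RelMap (L := LA) ArithRel.le
      ![Structure.funMap (L := LA) ArithFunc.succ ![r], natLit M (2 ^ k)]

/-- The standard system of a model: the sets of natural numbers coded in `M`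
via Ackermann's membership relation. -/
def SSy (M : Type*) [LA.Structure M] : Set (Set ℕ) :=
  {X | ∃ a : M, ∀ k : ℕ, k ∈ X ↔ ackMem k a}

/-- `M` is nonstandard: some element differs from all numerals. -/
def Nonstandard (M : Type*) [LA.Structure M] : Prop :=
  ∃ a : M, ∀ k : ℕ, a ≠ natLit M k

/-- Ackermann's membership formula `x ε y` (“the `x`-th bit of `y` is `1`”),
defined using the exponential graph formula. -/
def epsF : BF 2 :=
  (((bsubst (j := 5) expGraph ![suc (suc zer), vT 0, vT 2]) ⊓
    ((eqF (k := 5) (vT 1) (pls (pls (tms (vT 3) (pls (vT 2) (vT 2))) (vT 2)) (vT 4))) ⊓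
      (leF (k := 5) (suc (vT 4)) (vT 2)))).ex.ex).ex


/-! ## Auxiliary development -/

namespace SigmaChar
open FirstOrder.Language.BoundedFormula

/-- Substitution on terms. -/
def tsub {k j : ℕ} (t : Tk k) (ts : Fin k → Tk j) : Tk j :=
  t.subst (Sum.elim (fun e => (Empty.elim e : Tk j)) ts)

/-- Extend a substitution under a quantifier. -/
def ext {k j : ℕ} (ts : Fin k → Tk j) : Fin (k+1) → Tk (j+1) :=
  Fin.snoc (fun i => liftT (ts i)) (vT (Fin.last j))

/-- Structural simultaneous substitution. -/
def msubst : ∀ {k : ℕ}, BF k → ∀ {j : ℕ}, (Fin k → Tk j) → BF j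
  | _, .falsum, _, _ => .falsum
  | _, .equal t u, _, ts => .equal (tsub t ts) (tsub u ts)
  | _, .rel R v, _, ts => .rel R (fun i => tsub (v i) ts)
  | _, .imp φ ψ, _, ts => (msubst φ ts).imp (msubst ψ ts)
  | _, .all φ, _, ts => (msubst φ (ext ts)).all

@[simp] theorem msubst_falsum {k j : ℕ} (ts : Fin k → Tk j) :
    msubst (.falsum : BF k) ts = .falsum := rfl
@[simp] theorem msubst_imp {k j : ℕ} (φ ψ : BF k) (ts : Fin k → Tk j) :
    msubst (φ.imp ψ) ts = (msubst φ ts).imp (msubst ψ ts) := rfl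
@[simp] theorem msubst_all {k j : ℕ} (φ : BF (k+1)) (ts : Fin k → Tk j) :
    msubst φ.all ts = (msubst φ (ext ts)).all := rfl
@[simp] theorem msubst_not {k j : ℕ} (φ : BF k) (ts : Fin k → Tk j) :
    msubst φ.not ts = (msubst φ ts).not := rfl
@[simp] theorem msubst_inf {k j : ℕ} (φ ψ : BF k) (ts : Fin k → Tk j) :
    msubst (φ ⊓ ψ) ts = (msubst φ ts) ⊓ (msubst ψ ts) := rfl
@[simp] theorem msubst_ex {k j : ℕ} (φ : BF (k+1)) (ts : Fin k → Tk j) :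
    msubst φ.ex ts = (msubst φ (ext ts)).ex := rfl
@[simp] theorem msubst_equal {k j : ℕ} (t u : Tk k) (ts : Fin k → Tk j) :
    msubst (BoundedFormula.equal t u) ts = BoundedFormula.equal (tsub t ts) (tsub u ts) := rfl

end SigmaChar

namespace SigmaChar
open FirstOrder.Language.BoundedFormula

section Realize
variable {M : Type*} [LA.Structure M]

/-- The valuation on `Empty ⊕ Fin k` induced by `xs`. -/
def val {k : ℕ} (xs : Fin k → M) : Empty ⊕ Fin k → M :=
  Sum.elim (fun e => (Empty.elim e : M)) xs

theorem realize_tsub {k j : ℕ} (t : Tk k) (ts : Fin k → Tk j) (xs : Fin j → M) :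
    (tsub t ts).realize (val xs) = t.realize (val (fun i => (ts i).realize (val xs))) := by
  unfold tsub
  rw [Term.realize_subst]
  congr 1
  funext a
  rcases a with e | i
  · exact e.elim
  · rfl

theorem realize_liftT {k : ℕ} (t : Tk k) (xs : Fin k → M) (a : M) :
    (liftT t).realize (val (Fin.snoc xs a)) = t.realize (val xs) := by
  unfold liftT
  rw [Term.realize_relabel]
  congr 1
  funext b
  rcases b with e | i
  · exact e.elim
  · simp [val]

theorem ext_realize {k j : ℕ} (ts : Fin k → Tk j) (xs : Fin j → M) (a : M) :
    (fun i => (ext ts i).realize (val (Fin.snoc xs a)))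
      = Fin.snoc (fun i => (ts i).realize (val xs)) a := by
  funext i
  refine Fin.lastCases ?_ (fun i => ?_) i
  · simp [ext, Fin.snoc_last, vT, val]
  · simp only [ext, Fin.snoc_castSucc]
    rw [realize_liftT]

theorem realize_msubst : ∀ {k : ℕ} (φ : BF k) {j : ℕ} (ts : Fin k → Tk j) (xs : Fin j → M),
    ((msubst φ ts).Realize (fun e => Empty.elim e) xs ↔
      φ.Realize (fun e => Empty.elim e) (fun i => (ts i).realize (val xs)))
  | _, .falsum, _, _, _ => Iff.rfl
  | _, .equal t u, _, ts, xs => by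
      simp only [msubst, BoundedFormula.Realize]
      rw [show (Sum.elim (fun e => (Empty.elim e : M)) xs) = val xs from rfl,
        realize_tsub, realize_tsub]
      exact Iff.rfl
  | _, .rel R v, _, ts, xs => by
      simp only [msubst, BoundedFormula.Realize]
      rw [show (Sum.elim (fun e => (Empty.elim e : M)) xs) = val xs from rfl]
      have hf : (fun i => Term.realize (val xs) (tsub (v i) ts))
          = fun i => Term.realize (val (fun i => (ts i).realize (val xs))) (v i) := by
        funext i; rw [realize_tsub]
      rw [hf]
      exact Iff.rfl
  | _, .imp φ ψ, _, ts, xs => by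
      simp only [msubst, BoundedFormula.realize_imp]
      rw [realize_msubst φ ts xs, realize_msubst ψ ts xs]
  | _, .all φ, _, ts, xs => by
      simp only [msubst, BoundedFormula.realize_all]
      refine forall_congr' fun a => ?_
      rw [realize_msubst φ (ext ts) (Fin.snoc xs a), ext_realize]

end Realize
end SigmaChar

namespace SigmaChar
open FirstOrder.Language.BoundedFormula

@[simp] theorem tsub_vT {k j : ℕ} (i : Fin k) (ts : Fin k → Tk j) : tsub (vT i) ts = ts i := rfl

theorem ext_last {k j : ℕ} (ts : Fin k → Tk j) : ext ts (Fin.last k) = vT (Fin.last j) := by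
  simp [ext]

theorem tsub_liftT {k j : ℕ} (t : Tk k) (ts : Fin k → Tk j) :
    tsub (liftT t) (ext ts) = liftT (tsub t ts) := by
  induction t with
  | var a =>
    rcases a with e | i
    · exact e.elim
    · simp [liftT, tsub, Term.subst, Term.relabel, ext, Fin.snoc_castSucc]
  | func f v ih =>
    simp only [liftT, tsub, Term.relabel, Term.subst] at *
    congr 1
    funext i
    exact ih i

theorem msubst_leF {k j : ℕ} (a b : Tk k) (ts : Fin k → Tk j) :
    msubst (leF a b) ts = leF (tsub a ts) (tsub b ts) := by
  show BoundedFormula.rel _ _ = BoundedFormula.rel _ _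
  congr 1
  funext i
  fin_cases i <;> rfl

theorem ext_guard {k j : ℕ} (t : Tk k) (ts : Fin k → Tk j) :
    msubst (leF (vT (Fin.last k)) (liftT t)) (ext ts)
      = leF (vT (Fin.last j)) (liftT (tsub t ts)) := by
  rw [msubst_leF, tsub_vT, ext_last, tsub_liftT]

theorem delta0_msubst : ∀ {k : ℕ} {φ : BF k}, IsDelta0 φ → ∀ {j : ℕ} (ts : Fin k → Tk j),
    IsDelta0 (msubst φ ts) := by
  intro k φ h
  induction h with
  | falsum => intro j ts; exact .falsum
  | equal t u => intro j ts; exact .equal _ _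
  | rel R v => intro j ts; exact .rel _ _
  | imp h1 h2 ih1 ih2 => intro j ts; exact .imp (ih1 ts) (ih2 ts)
  | ballLE t h ih =>
    intro j ts
    rw [msubst_all, msubst_imp, ext_guard]
    exact .ballLE _ (ih (ext ts))
  | bexLE t h ih =>
    intro j ts
    rw [msubst_ex, msubst_inf, ext_guard]
    exact .bexLE _ (ih (ext ts))

theorem sigma_msubst {n k : ℕ} {φ : BF k} (h : IsSigmaF n φ) :
    ∀ (j : ℕ) (ts : Fin k → Tk j), IsSigmaF n (msubst φ ts) :=
  IsSigmaF.rec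
    (motive_1 := fun n k φ _ => ∀ (j : ℕ) (ts : Fin k → Tk j), IsSigmaF n (msubst φ ts))
    (motive_2 := fun n k φ _ => ∀ (j : ℕ) (ts : Fin k → Tk j), IsPiF n (msubst φ ts))
    (fun hd _ ts => .delta0 (delta0_msubst hd ts))
    (fun _ ih _ ts => .ofPi (ih _ ts))
    (fun _ ih _ ts => .mono (ih _ ts))
    (fun _ ih _ ts => msubst_ex _ ts ▸ IsSigmaF.ex (ih _ (ext ts)))
    (fun hd _ ts => .delta0 (delta0_msubst hd ts))
    (fun _ ih _ ts => .ofSigma (ih _ ts))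
    (fun _ ih _ ts => .mono (ih _ ts))
    (fun _ ih _ ts => msubst_all _ ts ▸ IsPiF.all (ih _ (ext ts)))
    h

theorem pi_msubst {n k : ℕ} {φ : BF k} (h : IsPiF n φ) :
    ∀ (j : ℕ) (ts : Fin k → Tk j), IsPiF n (msubst φ ts) :=
  IsPiF.rec
    (motive_1 := fun n k φ _ => ∀ (j : ℕ) (ts : Fin k → Tk j), IsSigmaF n (msubst φ ts))
    (motive_2 := fun n k φ _ => ∀ (j : ℕ) (ts : Fin k → Tk j), IsPiF n (msubst φ ts))
    (fun hd _ ts => .delta0 (delta0_msubst hd ts))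
    (fun _ ih _ ts => .ofPi (ih _ ts))
    (fun _ ih _ ts => .mono (ih _ ts))
    (fun _ ih _ ts => msubst_ex _ ts ▸ IsSigmaF.ex (ih _ (ext ts)))
    (fun hd _ ts => .delta0 (delta0_msubst hd ts))
    (fun _ ih _ ts => .ofSigma (ih _ ts))
    (fun _ ih _ ts => .mono (ih _ ts))
    (fun _ ih _ ts => msubst_all _ ts ▸ IsPiF.all (ih _ (ext ts)))
    h

theorem sigma_zero {k : ℕ} {φ : BF k} (h : IsSigmaF 0 φ) : IsDelta0 φ :=
  match h with | .delta0 hd => hd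

theorem pi_zero {k : ℕ} {φ : BF k} (h : IsPiF 0 φ) : IsDelta0 φ :=
  match h with | .delta0 hd => hd

theorem delta0_inf {k : ℕ} {φ ψ : BF k} (h1 : IsDelta0 φ) (h2 : IsDelta0 ψ) :
    IsDelta0 (φ ⊓ ψ) :=
  .imp (.imp h1 (.imp h2 .falsum)) .falsum

theorem delta0_not {k : ℕ} {φ : BF k} (h : IsDelta0 φ) : IsDelta0 φ.not :=
  .imp h .falsum

end SigmaChar

namespace SigmaChar
open FirstOrder.Language.BoundedFormula

section Sat
variable {M : Type*} [LA.Structure M] {k : ℕ}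

@[simp] theorem satM_falsum (xs : Fin k → M) : SatM M (.falsum : BF k) xs ↔ False := Iff.rfl

@[simp] theorem satM_imp (φ ψ : BF k) (xs : Fin k → M) :
    SatM M (φ.imp ψ) xs ↔ (SatM M φ xs → SatM M ψ xs) := BoundedFormula.realize_imp

@[simp] theorem satM_not (φ : BF k) (xs : Fin k → M) :
    SatM M φ.not xs ↔ ¬ SatM M φ xs := BoundedFormula.realize_not

@[simp] theorem satM_inf (φ ψ : BF k) (xs : Fin k → M) :
    SatM M (φ ⊓ ψ) xs ↔ SatM M φ xs ∧ SatM M ψ xs := BoundedFormula.realize_inf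

@[simp] theorem satM_all (φ : BF (k+1)) (xs : Fin k → M) :
    SatM M φ.all xs ↔ ∀ a : M, SatM M φ (Fin.snoc xs a) := BoundedFormula.realize_all

@[simp] theorem satM_ex (φ : BF (k+1)) (xs : Fin k → M) :
    SatM M φ.ex xs ↔ ∃ a : M, SatM M φ (Fin.snoc xs a) := BoundedFormula.realize_ex

end Sat

/-- Lift a formula, adding an unused last variable. -/
def liftF {k : ℕ} (φ : BF k) : BF (k+1) := msubst φ (fun i => vT i.castSucc)

theorem sigma_liftF {n k : ℕ} {φ : BF k} (h : IsSigmaF n φ) : IsSigmaF n (liftF φ) :=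
  sigma_msubst h _ _

theorem pi_liftF {n k : ℕ} {φ : BF k} (h : IsPiF n φ) : IsPiF n (liftF φ) :=
  pi_msubst h _ _

@[simp] theorem satM_liftF {M : Type*} [LA.Structure M] {k : ℕ} (φ : BF k)
    (xs : Fin k → M) (a : M) : SatM M (liftF φ) (Fin.snoc xs a) ↔ SatM M φ xs := by
  unfold liftF SatM
  rw [realize_msubst]
  have : (fun i => Term.realize (val (Fin.snoc xs a)) (vT (Fin.castSucc i))) = xs := by
    funext i
    simp [vT, val]
  rw [this]

/-- Semantic equivalence over all nonempty structures. -/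
def Eqv {k : ℕ} (φ ψ : BF k) : Prop :=
  ∀ (M : Type) [LA.Structure M] [Nonempty M] (xs : Fin k → M), SatM M φ xs ↔ SatM M ψ xs

end SigmaChar

namespace SigmaChar
open FirstOrder.Language.BoundedFormula

theorem neg_sigma {n k : ℕ} {φ : BF k} (h : IsSigmaF n φ) :
    ∃ ψ : BF k, IsPiF n ψ ∧ Eqv ψ φ.not :=
  IsSigmaF.rec
    (motive_1 := fun n k φ _ => ∃ ψ : BF k, IsPiF n ψ ∧ Eqv ψ φ.not)
    (motive_2 := fun n k φ _ => ∃ ψ : BF k, IsSigmaF n ψ ∧ Eqv ψ φ.not)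
    (fun hd => ⟨_, .delta0 (delta0_not hd), fun M _ _ xs => Iff.rfl⟩)
    (fun _ ih => by obtain ⟨ψ, h1, h2⟩ := ih; exact ⟨ψ, .ofSigma h1, h2⟩)
    (fun _ ih => by obtain ⟨ψ, h1, h2⟩ := ih; exact ⟨ψ, .mono h1, h2⟩)
    (fun _ ih => by
      obtain ⟨ψ, h1, h2⟩ := ih
      refine ⟨ψ.all, .all h1, ?_⟩
      intro M _ _ xs
      rw [satM_all, satM_not, satM_ex, not_exists]
      exact forall_congr' fun a => (h2 M (Fin.snoc xs a)).trans (satM_not _ _))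
    (fun hd => ⟨_, .delta0 (delta0_not hd), fun M _ _ xs => Iff.rfl⟩)
    (fun _ ih => by obtain ⟨ψ, h1, h2⟩ := ih; exact ⟨ψ, .ofPi h1, h2⟩)
    (fun _ ih => by obtain ⟨ψ, h1, h2⟩ := ih; exact ⟨ψ, .mono h1, h2⟩)
    (fun _ ih => by
      obtain ⟨ψ, h1, h2⟩ := ih
      refine ⟨ψ.ex, .ex h1, ?_⟩
      intro M _ _ xs
      rw [satM_ex, satM_not, satM_all, not_forall]
      exact exists_congr fun a => (h2 M (Fin.snoc xs a)).trans (satM_not _ _))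
    h

theorem neg_pi {n k : ℕ} {φ : BF k} (h : IsPiF n φ) :
    ∃ ψ : BF k, IsSigmaF n ψ ∧ Eqv ψ φ.not :=
  IsPiF.rec
    (motive_1 := fun n k φ _ => ∃ ψ : BF k, IsPiF n ψ ∧ Eqv ψ φ.not)
    (motive_2 := fun n k φ _ => ∃ ψ : BF k, IsSigmaF n ψ ∧ Eqv ψ φ.not)
    (fun hd => ⟨_, .delta0 (delta0_not hd), fun M _ _ xs => Iff.rfl⟩)
    (fun _ ih => by obtain ⟨ψ, h1, h2⟩ := ih; exact ⟨ψ, .ofSigma h1, h2⟩)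
    (fun _ ih => by obtain ⟨ψ, h1, h2⟩ := ih; exact ⟨ψ, .mono h1, h2⟩)
    (fun _ ih => by
      obtain ⟨ψ, h1, h2⟩ := ih
      refine ⟨ψ.all, .all h1, ?_⟩
      intro M _ _ xs
      rw [satM_all, satM_not, satM_ex, not_exists]
      exact forall_congr' fun a => (h2 M (Fin.snoc xs a)).trans (satM_not _ _))
    (fun hd => ⟨_, .delta0 (delta0_not hd), fun M _ _ xs => Iff.rfl⟩)
    (fun _ ih => by obtain ⟨ψ, h1, h2⟩ := ih; exact ⟨ψ, .ofPi h1, h2⟩)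
    (fun _ ih => by obtain ⟨ψ, h1, h2⟩ := ih; exact ⟨ψ, .mono h1, h2⟩)
    (fun _ ih => by
      obtain ⟨ψ, h1, h2⟩ := ih
      refine ⟨ψ.ex, .ex h1, ?_⟩
      intro M _ _ xs
      rw [satM_ex, satM_not, satM_all, not_forall]
      exact exists_congr fun a => (h2 M (Fin.snoc xs a)).trans (satM_not _ _))
    h

end SigmaChar

namespace SigmaChar
open FirstOrder.Language.BoundedFormula

/-- `Σₙ` is closed under conjunction, up to equivalence. -/
def AS (n : ℕ) : Prop := ∀ {k : ℕ} {φ ψ : BF k}, IsSigmaF n φ → IsSigmaF n ψ →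
  ∃ χ : BF k, IsSigmaF n χ ∧ Eqv χ (φ ⊓ ψ)

/-- `Πₙ` is closed under conjunction, up to equivalence. -/
def AP (n : ℕ) : Prop := ∀ {k : ℕ} {φ ψ : BF k}, IsPiF n φ → IsPiF n ψ →
  ∃ χ : BF k, IsPiF n χ ∧ Eqv χ (φ ⊓ ψ)

theorem eqv_comm_inf {k : ℕ} {χ φ ψ : BF k} (h : Eqv χ (ψ ⊓ φ)) : Eqv χ (φ ⊓ ψ) := by
  intro M _ _ xs
  rw [h M xs, satM_inf, satM_inf, and_comm]

theorem eqv_all_lift_left {k : ℕ} {χ ψ₀ : BF (k+1)} {φ : BF k}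
    (h : Eqv χ (liftF φ ⊓ ψ₀)) : Eqv χ.all (φ ⊓ ψ₀.all) := by
  intro M _ _ xs
  rw [satM_all, satM_inf, satM_all]
  constructor
  · intro ha
    have h1 := fun a => (h M (Fin.snoc xs a)).mp (ha a)
    simp only [satM_inf, satM_liftF] at h1
    exact ⟨(h1 (Classical.arbitrary M)).1, fun a => (h1 a).2⟩
  · rintro ⟨h1, h2⟩ a
    rw [h M (Fin.snoc xs a), satM_inf, satM_liftF]
    exact ⟨h1, h2 a⟩

theorem eqv_all_lift_right {k : ℕ} {χ φ₀ : BF (k+1)} {ψ : BF k}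
    (h : Eqv χ (φ₀ ⊓ liftF ψ)) : Eqv χ.all (φ₀.all ⊓ ψ) := by
  intro M _ _ xs
  rw [satM_all, satM_inf, satM_all]
  constructor
  · intro ha
    have h1 := fun a => (h M (Fin.snoc xs a)).mp (ha a)
    simp only [satM_inf, satM_liftF] at h1
    exact ⟨fun a => (h1 a).1, (h1 (Classical.arbitrary M)).2⟩
  · rintro ⟨h1, h2⟩ a
    rw [h M (Fin.snoc xs a), satM_inf, satM_liftF]
    exact ⟨h1 a, h2⟩

theorem eqv_ex_lift_left {k : ℕ} {χ ψ₀ : BF (k+1)} {φ : BF k}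
    (h : Eqv χ (liftF φ ⊓ ψ₀)) : Eqv χ.ex (φ ⊓ ψ₀.ex) := by
  intro M _ _ xs
  rw [satM_ex, satM_inf, satM_ex]
  constructor
  · rintro ⟨a, ha⟩
    rw [h M (Fin.snoc xs a), satM_inf, satM_liftF] at ha
    exact ⟨ha.1, a, ha.2⟩
  · rintro ⟨h1, a, h2⟩
    refine ⟨a, (h M (Fin.snoc xs a)).mpr ?_⟩
    rw [satM_inf, satM_liftF]
    exact ⟨h1, h2⟩

theorem eqv_ex_lift_right {k : ℕ} {χ φ₀ : BF (k+1)} {ψ : BF k}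
    (h : Eqv χ (φ₀ ⊓ liftF ψ)) : Eqv χ.ex (φ₀.ex ⊓ ψ) := by
  intro M _ _ xs
  rw [satM_ex, satM_inf, satM_ex]
  constructor
  · rintro ⟨a, ha⟩
    rw [h M (Fin.snoc xs a), satM_inf, satM_liftF] at ha
    exact ⟨⟨a, ha.1⟩, ha.2⟩
  · rintro ⟨⟨a, h1⟩, h2⟩
    refine ⟨a, (h M (Fin.snoc xs a)).mpr ?_⟩
    rw [satM_inf, satM_liftF]
    exact ⟨h1, h2⟩

/-- Mixed conjunction: `Σₘ ⊓ Πₘ` is `Σ_{m+1}` (main induction on the `Σ` derivation). -/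
theorem mixedS {a k : ℕ} {φ : BF k} (h : IsSigmaF a φ) :
    ∀ m : ℕ, a = m → AP m → ∀ ψ : BF k, IsPiF m ψ →
      ∃ χ : BF k, IsSigmaF (m+1) χ ∧ Eqv χ (φ ⊓ ψ) :=
  IsSigmaF.rec
    (motive_1 := fun a k φ _ => ∀ m : ℕ, a = m → AP m → ∀ ψ : BF k, IsPiF m ψ →
      ∃ χ : BF k, IsSigmaF (m+1) χ ∧ Eqv χ (φ ⊓ ψ))
    (motive_2 := fun _ _ _ _ => True)
    (fun hd => by
      intro m heq hAP ψ hψ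
      obtain ⟨χ, h1, h2⟩ := hAP (.delta0 hd) hψ
      exact ⟨χ, .ofPi h1, h2⟩)
    (fun hp _ => by
      intro m heq hAP ψ hψ
      subst heq
      obtain ⟨χ, h1, h2⟩ := hAP (.mono hp) hψ
      exact ⟨χ, .ofPi h1, h2⟩)
    (fun hs _ => by
      intro m heq hAP ψ hψ
      subst heq
      obtain ⟨χ, h1, h2⟩ := hAP (.ofSigma hs) hψ
      exact ⟨χ, .ofPi h1, h2⟩)
    (fun _ ih => by
      intro m heq hAP ψ hψ
      subst heq
      obtain ⟨χ, h1, h2⟩ := ih _ rfl hAP (liftF ψ) (pi_liftF hψ)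
      exact ⟨χ.ex, .ex h1, eqv_ex_lift_right h2⟩)
    (fun _ => trivial) (fun _ _ => trivial) (fun _ _ => trivial) (fun _ _ => trivial)
    h

/-- Mixed conjunction: `Σₘ ⊓ Πₘ` is `Π_{m+1}` (main induction on the `Π` derivation). -/
theorem mixedP {a k : ℕ} {ψ : BF k} (h : IsPiF a ψ) :
    ∀ m : ℕ, a = m → AS m → ∀ φ : BF k, IsSigmaF m φ →
      ∃ χ : BF k, IsPiF (m+1) χ ∧ Eqv χ (φ ⊓ ψ) :=
  IsPiF.rec
    (motive_1 := fun _ _ _ _ => True)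
    (motive_2 := fun a k ψ _ => ∀ m : ℕ, a = m → AS m → ∀ φ : BF k, IsSigmaF m φ →
      ∃ χ : BF k, IsPiF (m+1) χ ∧ Eqv χ (φ ⊓ ψ))
    (fun _ => trivial) (fun _ _ => trivial) (fun _ _ => trivial) (fun _ _ => trivial)
    (fun hd => by
      intro m heq hAS φ hφ
      obtain ⟨χ, h1, h2⟩ := hAS hφ (.delta0 hd)
      exact ⟨χ, .ofSigma h1, h2⟩)
    (fun hs _ => by
      intro m heq hAS φ hφ
      subst heq
      obtain ⟨χ, h1, h2⟩ := hAS hφ (.mono hs)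
      exact ⟨χ, .ofSigma h1, h2⟩)
    (fun hp _ => by
      intro m heq hAS φ hφ
      subst heq
      obtain ⟨χ, h1, h2⟩ := hAS hφ (.ofPi hp)
      exact ⟨χ, .ofSigma h1, h2⟩)
    (fun _ ih => by
      intro m heq hAS φ hφ
      subst heq
      obtain ⟨χ, h1, h2⟩ := ih _ rfl hAS (liftF φ) (sigma_liftF hφ)
      exact ⟨χ.all, .all h1, eqv_all_lift_left h2⟩)
    h

theorem inner_sigma {a k : ℕ} {ψ : BF k} (h : IsSigmaF a ψ) :
    ∀ m : ℕ, a = m + 1 → AS m → AP m → ∀ φ : BF k, (IsSigmaF m φ ∨ IsPiF m φ) →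
      ∃ χ : BF k, IsSigmaF (m+1) χ ∧ Eqv χ (φ ⊓ ψ) :=
  IsSigmaF.rec
    (motive_1 := fun a k ψ _ => ∀ m : ℕ, a = m + 1 → AS m → AP m →
      ∀ φ : BF k, (IsSigmaF m φ ∨ IsPiF m φ) →
      ∃ χ : BF k, IsSigmaF (m+1) χ ∧ Eqv χ (φ ⊓ ψ))
    (motive_2 := fun _ _ _ _ => True)
    (fun hd => by
      intro m heq hAS hAP φ hsp
      rcases hsp with hφ | hφ
      · obtain ⟨χ, h1, h2⟩ := hAS hφ (.delta0 hd)
        exact ⟨χ, .mono h1, h2⟩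
      · obtain ⟨χ, h1, h2⟩ := mixedS (.delta0 hd) m rfl hAP φ hφ
        exact ⟨χ, h1, eqv_comm_inf h2⟩)
    (fun hp _ => by
      intro m heq hAS hAP φ hsp
      obtain rfl := Nat.succ.inj heq
      rcases hsp with hφ | hφ
      · exact mixedS hφ _ rfl hAP _ hp
      · obtain ⟨χ, h1, h2⟩ := hAP hφ hp
        exact ⟨χ, .ofPi h1, h2⟩)
    (fun hs _ => by
      intro m heq hAS hAP φ hsp
      obtain rfl := Nat.succ.inj heq
      rcases hsp with hφ | hφ
      · obtain ⟨χ, h1, h2⟩ := hAS hφ hs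
        exact ⟨χ, .mono h1, h2⟩
      · obtain ⟨χ, h1, h2⟩ := mixedS hs _ rfl hAP φ hφ
        exact ⟨χ, h1, eqv_comm_inf h2⟩)
    (fun _ ih => by
      intro m heq hAS hAP φ hsp
      obtain rfl := Nat.succ.inj heq
      obtain ⟨χ, h1, h2⟩ := ih _ rfl hAS hAP (liftF φ)
        (hsp.elim (fun h' => .inl (sigma_liftF h')) (fun h' => .inr (pi_liftF h')))
      exact ⟨χ.ex, .ex h1, eqv_ex_lift_left h2⟩)
    (fun _ => trivial) (fun _ _ => trivial) (fun _ _ => trivial) (fun _ _ => trivial)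
    h

theorem inner_pi {a k : ℕ} {ψ : BF k} (h : IsPiF a ψ) :
    ∀ m : ℕ, a = m + 1 → AS m → AP m → ∀ φ : BF k, (IsSigmaF m φ ∨ IsPiF m φ) →
      ∃ χ : BF k, IsPiF (m+1) χ ∧ Eqv χ (φ ⊓ ψ) :=
  IsPiF.rec
    (motive_1 := fun _ _ _ _ => True)
    (motive_2 := fun a k ψ _ => ∀ m : ℕ, a = m + 1 → AS m → AP m →
      ∀ φ : BF k, (IsSigmaF m φ ∨ IsPiF m φ) →
      ∃ χ : BF k, IsPiF (m+1) χ ∧ Eqv χ (φ ⊓ ψ))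
    (fun _ => trivial) (fun _ _ => trivial) (fun _ _ => trivial) (fun _ _ => trivial)
    (fun hd => by
      intro m heq hAS hAP φ hsp
      rcases hsp with hφ | hφ
      · exact mixedP (.delta0 hd) m rfl hAS φ hφ
      · obtain ⟨χ, h1, h2⟩ := hAP hφ (.delta0 hd)
        exact ⟨χ, .mono h1, h2⟩)
    (fun hs _ => by
      intro m heq hAS hAP φ hsp
      obtain rfl := Nat.succ.inj heq
      rcases hsp with hφ | hφ
      · obtain ⟨χ, h1, h2⟩ := hAS hφ hs
        exact ⟨χ, .ofSigma h1, h2⟩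
      · obtain ⟨χ, h1, h2⟩ := mixedP hφ _ rfl hAS _ hs
        exact ⟨χ, h1, eqv_comm_inf h2⟩)
    (fun hp _ => by
      intro m heq hAS hAP φ hsp
      obtain rfl := Nat.succ.inj heq
      rcases hsp with hφ | hφ
      · exact mixedP hp _ rfl hAS φ hφ
      · obtain ⟨χ, h1, h2⟩ := hAP hφ hp
        exact ⟨χ, .mono h1, h2⟩)
    (fun _ ih => by
      intro m heq hAS hAP φ hsp
      obtain rfl := Nat.succ.inj heq
      obtain ⟨χ, h1, h2⟩ := ih _ rfl hAS hAP (liftF φ)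
        (hsp.elim (fun h' => .inl (sigma_liftF h')) (fun h' => .inr (pi_liftF h')))
      exact ⟨χ.all, .all h1, eqv_all_lift_left h2⟩)
    h

theorem outer_sigma {a k : ℕ} {φ : BF k} (h : IsSigmaF a φ) :
    ∀ m : ℕ, a = m + 1 → AS m → AP m → ∀ ψ : BF k, IsSigmaF (m+1) ψ →
      ∃ χ : BF k, IsSigmaF (m+1) χ ∧ Eqv χ (φ ⊓ ψ) :=
  IsSigmaF.rec
    (motive_1 := fun a k φ _ => ∀ m : ℕ, a = m + 1 → AS m → AP m →
      ∀ ψ : BF k, IsSigmaF (m+1) ψ →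
      ∃ χ : BF k, IsSigmaF (m+1) χ ∧ Eqv χ (φ ⊓ ψ))
    (motive_2 := fun _ _ _ _ => True)
    (fun hd => by
      intro m heq hAS hAP ψ hψ
      exact inner_sigma hψ _ rfl hAS hAP _ (.inl (.delta0 hd)))
    (fun hp _ => by
      intro m heq hAS hAP ψ hψ
      obtain rfl := Nat.succ.inj heq
      exact inner_sigma hψ _ rfl hAS hAP _ (.inr hp))
    (fun hs _ => by
      intro m heq hAS hAP ψ hψ
      obtain rfl := Nat.succ.inj heq
      exact inner_sigma hψ _ rfl hAS hAP _ (.inl hs))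
    (fun _ ih => by
      intro m heq hAS hAP ψ hψ
      obtain rfl := Nat.succ.inj heq
      obtain ⟨χ, h1, h2⟩ := ih _ rfl hAS hAP (liftF ψ) (sigma_liftF hψ)
      exact ⟨χ.ex, .ex h1, eqv_ex_lift_right h2⟩)
    (fun _ => trivial) (fun _ _ => trivial) (fun _ _ => trivial) (fun _ _ => trivial)
    h

theorem outer_pi {a k : ℕ} {φ : BF k} (h : IsPiF a φ) :
    ∀ m : ℕ, a = m + 1 → AS m → AP m → ∀ ψ : BF k, IsPiF (m+1) ψ →
      ∃ χ : BF k, IsPiF (m+1) χ ∧ Eqv χ (φ ⊓ ψ) :=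
  IsPiF.rec
    (motive_1 := fun _ _ _ _ => True)
    (motive_2 := fun a k φ _ => ∀ m : ℕ, a = m + 1 → AS m → AP m →
      ∀ ψ : BF k, IsPiF (m+1) ψ →
      ∃ χ : BF k, IsPiF (m+1) χ ∧ Eqv χ (φ ⊓ ψ))
    (fun _ => trivial) (fun _ _ => trivial) (fun _ _ => trivial) (fun _ _ => trivial)
    (fun hd => by
      intro m heq hAS hAP ψ hψ
      exact inner_pi hψ _ rfl hAS hAP _ (.inl (.delta0 hd)))
    (fun hs _ => by
      intro m heq hAS hAP ψ hψ
      obtain rfl := Nat.succ.inj heq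
      exact inner_pi hψ _ rfl hAS hAP _ (.inl hs))
    (fun hp _ => by
      intro m heq hAS hAP ψ hψ
      obtain rfl := Nat.succ.inj heq
      exact inner_pi hψ _ rfl hAS hAP _ (.inr hp))
    (fun _ ih => by
      intro m heq hAS hAP ψ hψ
      obtain rfl := Nat.succ.inj heq
      obtain ⟨χ, h1, h2⟩ := ih _ rfl hAS hAP (liftF ψ) (pi_liftF hψ)
      exact ⟨χ.all, .all h1, eqv_all_lift_right h2⟩)
    h

theorem AS_and_AP : ∀ n : ℕ, AS n ∧ AP n := by
  intro n
  induction n with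
  | zero =>
    constructor
    · intro k φ ψ h1 h2
      exact ⟨_, .delta0 (delta0_inf (sigma_zero h1) (sigma_zero h2)), fun M _ _ xs => Iff.rfl⟩
    · intro k φ ψ h1 h2
      exact ⟨_, .delta0 (delta0_inf (pi_zero h1) (pi_zero h2)), fun M _ _ xs => Iff.rfl⟩
  | succ n ih =>
    exact ⟨fun h1 h2 => outer_sigma h1 n rfl ih.1 ih.2 _ h2,
      fun h1 h2 => outer_pi h1 n rfl ih.1 ih.2 _ h2⟩

end SigmaChar

namespace SigmaChar
open FirstOrder.Language.BoundedFormula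

/-- Numeral substitution. -/
def nums {k : ℕ} (v : Fin k → ℕ) : Fin k → Tk 0 := fun i => cterm (numeral (v i))

theorem realize_cterm {k : ℕ} (c : LA.Term Empty) {M : Type*} [LA.Structure M]
    (xs : Fin k → M) :
    (cterm c : Tk k).realize (val xs) = c.realize (fun e => Empty.elim e) := by
  unfold cterm
  rw [Term.realize_relabel]
  have h : (val (M := M) xs ∘ Sum.inl) = (fun e => Empty.elim e) :=
    funext fun e => e.elim
  rw [h]

theorem natLit_nat (m : ℕ) : natLit ℕ m = m := by
  induction m with
  | zero => rfl
  | succ m ih => exact congrArg (· + 1) ih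

theorem realize_msubst_nums {M : Type*} [LA.Structure M] {k : ℕ} (φ : BF k) (v : Fin k → ℕ) :
    SatS M (msubst φ (nums v)) ↔ SatM M φ (fun i => natLit M (v i)) := by
  unfold SatS SatM
  rw [realize_msubst]
  have h : (fun i => Term.realize (val (![] : Fin 0 → M)) (nums v i))
      = fun i => natLit M (v i) := by
    funext i
    exact realize_cterm _ _
  rw [h]

theorem trueInN_msubst_nums {k : ℕ} (φ : BF k) (v : Fin k → ℕ) :
    TrueInN (msubst φ (nums v)) ↔ SatM ℕ φ v := by
  rw [show TrueInN (msubst φ (nums v)) = SatS ℕ (msubst φ (nums v)) from rfl,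
    realize_msubst_nums]
  have h : (fun i => natLit ℕ (v i)) = v := funext fun i => natLit_nat (v i)
  rw [h]

theorem natLit_snoc (M : Type*) [LA.Structure M] {k : ℕ} (v : Fin k → ℕ) (a : ℕ) :
    (fun i : Fin (k+1) => natLit M (@Fin.snoc k (fun _ => ℕ) v a i))
      = Fin.snoc (fun i => natLit M (v i)) (natLit M a) := by
  funext i
  induction i using Fin.lastCases with
  | last => simp
  | cast j => simp

/-- Every true `Σ_{n+1}` formula instance is implied by a true `Πₙ` sentence. -/
theorem witnessR {a k : ℕ} {φ : BF k} (h : IsSigmaF a φ) :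
    ∀ n : ℕ, a = n + 1 → ∀ v : Fin k → ℕ, SatM ℕ φ v →
      ∃ π : LA.Sentence, IsPiF n π ∧ TrueInN π ∧
        ∀ (M : Type) [LA.Structure M] [Nonempty M],
          SatS M π → SatM M φ (fun i => natLit M (v i)) :=
  IsSigmaF.rec
    (motive_1 := fun a k φ _ => ∀ n : ℕ, a = n + 1 → ∀ v : Fin k → ℕ, SatM ℕ φ v →
      ∃ π : LA.Sentence, IsPiF n π ∧ TrueInN π ∧
        ∀ (M : Type) [LA.Structure M] [Nonempty M],
          SatS M π → SatM M φ (fun i => natLit M (v i)))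
    (motive_2 := fun _ _ _ _ => True)
    (fun hd => by
      intro n heq v hsat
      exact ⟨msubst _ (nums v), .delta0 (delta0_msubst hd _),
        (trueInN_msubst_nums _ v).mpr hsat,
        fun M _ _ hM => (realize_msubst_nums _ v).mp hM⟩)
    (fun hp _ => by
      intro n heq v hsat
      obtain rfl := Nat.succ.inj heq
      exact ⟨msubst _ (nums v), pi_msubst hp _ _,
        (trueInN_msubst_nums _ v).mpr hsat,
        fun M _ _ hM => (realize_msubst_nums _ v).mp hM⟩)
    (fun hs ih => by
      intro n heq v hsat
      rcases n with _ | n'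
      · obtain rfl := Nat.succ.inj heq
        exact ⟨msubst _ (nums v), .delta0 (delta0_msubst (sigma_zero hs) _),
          (trueInN_msubst_nums _ v).mpr hsat,
          fun M _ _ hM => (realize_msubst_nums _ v).mp hM⟩
      · obtain rfl := Nat.succ.inj heq
        obtain ⟨π, h1, h2, h3⟩ := ih n' rfl v hsat
        exact ⟨π, .mono h1, h2, h3⟩)
    (fun hs ih => by
      intro n heq v hsat
      obtain rfl := Nat.succ.inj heq
      rw [satM_ex] at hsat
      obtain ⟨a, ha⟩ := hsat
      obtain ⟨π, h1, h2, h3⟩ := ih _ rfl (Fin.snoc v a) ha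
      refine ⟨π, h1, h2, ?_⟩
      intro M _ _ hM
      rw [satM_ex]
      refine ⟨natLit M a, ?_⟩
      have := h3 M hM
      rwa [natLit_snoc] at this)
    (fun _ => trivial) (fun _ _ => trivial) (fun _ _ => trivial) (fun _ _ => trivial)
    h

/-- Sentence version. -/
theorem witnessS {n : ℕ} {σ : LA.Sentence} (h : IsSigmaF (n+1) σ) (ht : TrueInN σ) :
    ∃ π : LA.Sentence, IsPiF n π ∧ TrueInN π ∧
      ∀ (M : Type) [LA.Structure M] [Nonempty M], SatS M π → SatS M σ := by
  obtain ⟨π, h1, h2, h3⟩ := witnessR h n rfl ![] ht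
  refine ⟨π, h1, h2, ?_⟩
  intro M _ _ hM
  have := h3 M hM
  have he : (fun i => natLit M ((![] : Fin 0 → ℕ) i)) = (![] : Fin 0 → M) :=
    funext fun i => i.elim0
  rwa [he] at this

/-- Finitely many true `Σ_{n+1}` sentences are implied by a single true `Πₙ` sentence. -/
theorem conjWitness (n : ℕ) (l : List LA.Sentence)
    (hall : ∀ σ ∈ l, IsSigmaF (n+1) σ ∧ TrueInN σ) :
    ∃ π : LA.Sentence, IsPiF n π ∧ TrueInN π ∧
      ∀ (M : Type) [LA.Structure M] [Nonempty M], SatS M π → ∀ σ ∈ l, SatS M σ := by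
  induction l with
  | nil =>
    refine ⟨fal.not, .delta0 (delta0_not .falsum), ?_, ?_⟩
    · show SatM ℕ fal.not ![]
      rw [satM_not]
      exact fun h => h
    · intro M _ _ _ σ hσ
      exact absurd hσ List.not_mem_nil
  | cons σ l ih =>
    obtain ⟨π1, hp1, ht1, hi1⟩ := ih (fun τ hτ => hall τ (List.mem_cons_of_mem _ hτ))
    obtain ⟨hσ, htσ⟩ := hall σ List.mem_cons_self
    obtain ⟨π2, hp2, ht2, hi2⟩ := witnessS hσ htσ
    obtain ⟨χ, hχ, he⟩ := (AS_and_AP n).2 hp2 hp1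
    refine ⟨χ, hχ, ?_, ?_⟩
    · show SatM ℕ χ ![]
      rw [he ℕ ![], satM_inf]
      exact ⟨ht2, ht1⟩
    · intro M _ _ hM τ hτ
      have hs := (he M ![]).mp hM
      rw [satM_inf] at hs
      rcases List.mem_cons.mp hτ with rfl | hτ'
      · exact hi2 M hs.1
      · exact hi1 M hs.2 τ hτ'

end SigmaChar

namespace SigmaChar
open FirstOrder.Language.BoundedFormula

theorem satS_realize_eq {M : Type*} [LA.Structure M] (φ : LA.Sentence)
    (w : Empty → M) (xs : Fin 0 → M) : BoundedFormula.Realize φ w xs ↔ SatS M φ := by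
  unfold SatS SatM
  rw [show w = (fun e => Empty.elim e) from funext fun e => e.elim,
    show xs = (![] : Fin 0 → M) from funext fun i => i.elim0]

theorem satS_iff_models {M : Type*} [LA.Structure M] (φ : LA.Sentence) :
    SatS M φ ↔ M ⊨ φ :=
  (satS_realize_eq φ default default).symm

theorem prv_elim {T : LA.Theory} {φ : LA.Sentence} (h : Prv T φ)
    (M : Type) [LA.Structure M] [Nonempty M] (hT : ∀ ψ ∈ T, SatS M ψ) : SatS M φ := by
  haveI : M ⊨ T := (Theory.model_iff T).mpr (fun ψ hψ => (satS_iff_models ψ).mp (hT ψ hψ))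
  exact (satS_realize_eq φ _ _).mp (h ⟨M⟩ (fun e => Empty.elim e) ![])

theorem prv_intro {T : LA.Theory} {φ : LA.Sentence}
    (h : ∀ (M : Type) [LA.Structure M] [Nonempty M], (∀ ψ ∈ T, SatS M ψ) → SatS M φ) :
    Prv T φ := by
  intro M w xs
  have hs : ∀ ψ ∈ T, SatS M.Carrier ψ := fun ψ hψ =>
    (satS_iff_models ψ).mpr (Theory.realize_sentence_of_mem T hψ)
  exact (satS_realize_eq φ w xs).mpr (h M.Carrier hs)

theorem consistent_iff_sat (T : LA.Theory) : Consistent T ↔ T.IsSatisfiable := by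
  unfold Consistent
  constructor
  · intro h
    by_contra hns
    exact h (fun M v xs => absurd ⟨M⟩ hns)
  · rintro ⟨M⟩ hPrv
    exact hPrv M (fun e => e.elim) ![]

theorem p2_p1 {n : ℕ} {T : LA.Theory} (h : PiSound (n+1) T) : SigmaSound n T :=
  fun φ hφ hp => h φ (.ofSigma hφ) hp

theorem p3_p2 {n : ℕ} {T : LA.Theory} (h3 : Consistent (T ∪ trueSigma (n+1))) :
    PiSound (n+1) T := by
  intro φ hφ hp
  by_contra hnt
  obtain ⟨ν, hν, he⟩ := neg_pi hφ
  have htν : TrueInN ν := by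
    show SatM ℕ ν ![]
    rw [he ℕ ![], satM_not]
    exact hnt
  apply h3
  intro M w xs
  exfalso
  have hsT : ∀ ψ ∈ T, SatS M.Carrier ψ := fun ψ hψ =>
    (satS_iff_models ψ).mpr
      (Theory.realize_sentence_of_mem (T ∪ trueSigma (n+1)) (Set.mem_union_left _ hψ))
  have hφM : SatS M.Carrier φ := prv_elim hp M.Carrier hsT
  have hνM : SatS M.Carrier ν := (satS_iff_models ν).mpr
    (Theory.realize_sentence_of_mem (T ∪ trueSigma (n+1))
      (Set.mem_union_right _ ⟨hν, htν⟩))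
  rw [show SatS M.Carrier ν = SatM M.Carrier ν ![] from rfl, he M.Carrier ![], satM_not] at hνM
  exact hνM hφM

theorem p1_p3 {n : ℕ} {T : LA.Theory} (h1 : SigmaSound n T) :
    Consistent (T ∪ trueSigma (n+1)) := by
  classical
  by_contra hc
  have hns : ¬ (T ∪ trueSigma (n+1)).IsSatisfiable := fun hs =>
    hc ((consistent_iff_sat _).mpr hs)
  have hfin : ¬ (T ∪ trueSigma (n+1)).IsFinitelySatisfiable := by
    rw [← Theory.isSatisfiable_iff_isFinitelySatisfiable]
    exact hns
  rw [Theory.IsFinitelySatisfiable] at hfin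
  push_neg at hfin
  obtain ⟨T0, hT0sub, hT0⟩ := hfin
  set l : List LA.Sentence := (T0.filter (fun σ => σ ∉ T)).toList with hl
  have hlmem : ∀ σ ∈ l, IsSigmaF (n+1) σ ∧ TrueInN σ := by
    intro σ hσ
    rw [hl, Finset.mem_toList, Finset.mem_filter] at hσ
    rcases hT0sub hσ.1 with h | h
    · exact absurd h hσ.2
    · exact h
  obtain ⟨π, hπ, htπ, himp⟩ := conjWitness n l hlmem
  obtain ⟨ν, hν, he⟩ := neg_pi hπ
  have hprv : Prv T ν := by
    apply prv_intro
    intro M _ _ hMT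
    show SatM M ν ![]
    rw [he M ![], satM_not]
    intro hMπ
    apply hT0
    haveI : M ⊨ (↑T0 : LA.Theory) := by
      refine (Theory.model_iff (↑T0 : LA.Theory)).mpr ?_
      intro ψ hψ
      by_cases hψT : ψ ∈ T
      · exact (satS_iff_models ψ).mp (hMT ψ hψT)
      · refine (satS_iff_models ψ).mp (himp M hMπ ψ ?_)
        rw [hl, Finset.mem_toList, Finset.mem_filter]
        exact ⟨hψ, hψT⟩
    exact ⟨⟨M⟩⟩
  have htν : TrueInN ν := h1 ν hν hprv
  rw [show TrueInN ν = SatM ℕ ν ![] from rfl, he ℕ ![], satM_not] at htν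
  exact htν htπ

end SigmaChar

/-- **Characterizations of `Σ_n`-soundness** (Fact 1): for any consistent theory `T`
extending `Q`: `T` is `Σ_n`-sound iff `T` is `Π_{n+1}`-sound iff `T + Th_{Σ_{n+1}}(ℕ)`
is consistent. -/
theorem sigma_soundness_characterization
    (n : ℕ) (T : LA.Theory)
    (hext : Extends T QTheory)
    (hcons : Consistent T) :
    (SigmaSound n T ↔ PiSound (n + 1) T) ∧
    (SigmaSound n T ↔ Consistent (T ∪ trueSigma (n + 1))) := by
  constructor
  · exact ⟨fun h => SigmaChar.p3_p2 (SigmaChar.p1_p3 h), fun h => SigmaChar.p2_p1 h⟩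
  · exact ⟨fun h => SigmaChar.p1_p3 h, fun h => SigmaChar.p2_p1 (SigmaChar.p3_p2 h)⟩
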